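/- arXiv:0807.0156 — 3 statements merged into one kernel-verified Lean document; each statement's English description precedes it below -/
import Mathlib

section
/- Let (A^a_b) be a non-singular matrix of smooth functions on an open subset of M satisfying Ẽ_a(A^c_b) + C^c_{ad}A^d_b = 0, set Ê_a := A^b_a Ẽ_b, and let (Ā^a_b) be the inverse matrix of (A^a_b). Then [Ẽ_a, Ê_b] = 0 for all a, b (so the Ê_a are G-invariant vector fields), and [Ê_a, Ê_b] = −A^d_a A^e_b Ā^c_f C^f_{de} Ê_c. -/
/- STATEMENT 5.
Let (A^a_b) be a non-singular matrix of smooth functions satisfying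
Ẽ_a(A^c_b) + C^c_{ad} A^d_b = 0, set Ê_a := A^b_a Ẽ_b, and let (Ā^a_b) be the inverse
matrix.  Then [Ẽ_a, Ê_b] = 0 (the Ê_a are G-invariant), and
[Ê_a, Ê_b] = − A^d_a A^e_b Ā^c_f C^f_{de} Ê_c.
M is modelled on `E`; the bracket of vector fields X, Y : E → E is
[X,Y](m) = DY(m)(X(m)) − DX(m)(Y(m)); `C c a b` denotes C^c_{ab}, `A a b` is A^a_b. -/
theorem body_fixed_basis_brackets
    {E : Type*} [NormedAddCommGroup E] [NormedSpace ℝ E]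
    {ι : Type*} [Fintype ι] [DecidableEq ι]
    -- fundamental vector fields Ẽ_a with [Ẽ_a,Ẽ_b] = C^c_{ab}Ẽ_c
    (Etil : ι → E → E) (hEtil : ∀ a, ContDiff ℝ (⊤ : ℕ∞) (Etil a))
    (C : ι → ι → ι → ℝ)
    (hbrac : ∀ a b (m : E),
      fderiv ℝ (Etil b) m (Etil a m) - fderiv ℝ (Etil a) m (Etil b m)
        = ∑ c, C c a b • Etil c m)
    -- a non-singular matrix of smooth functions A^a_b with inverse Ā^a_b
    (A Abar : ι → ι → E → ℝ)
    (hA : ∀ a b, ContDiff ℝ (⊤ : ℕ∞) (A a b)) (hAbar : ∀ a b, ContDiff ℝ (⊤ : ℕ∞) (Abar a b))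
    (hinv₁ : ∀ (m : E) a b, ∑ c, A a c m * Abar c b m = if a = b then 1 else 0)
    (hinv₂ : ∀ (m : E) a b, ∑ c, Abar a c m * A c b m = if a = b then 1 else 0)
    -- the linear system Ẽ_a(A^c_b) + C^c_{ad}A^d_b = 0
    (hPDE : ∀ a b c (m : E),
      fderiv ℝ (A c b) m (Etil a m) + ∑ d, C c a d * A d b m = 0)
    -- the body-fixed basis Ê_a := A^b_a Ẽ_b
    (Ehat : ι → E → E)
    (hEhat : ∀ a (m : E), Ehat a m = ∑ b, A b a m • Etil b m) :
    -- (1) [Ẽ_a, Ê_b] = 0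
    (∀ a b (m : E),
      fderiv ℝ (Ehat b) m (Etil a m) - fderiv ℝ (Etil a) m (Ehat b m) = 0)
    -- (2) [Ê_a, Ê_b] = −A^d_a A^e_b Ā^c_f C^f_{de} Ê_c
    ∧ (∀ a b (m : E),
      fderiv ℝ (Ehat b) m (Ehat a m) - fderiv ℝ (Ehat a) m (Ehat b m)
        = -∑ c, (∑ d, ∑ e, ∑ f, A d a m * A e b m * Abar c f m * C f d e)
            • Ehat c m) := by
  have hA' : ∀ a b (m : E), DifferentiableAt ℝ (A a b) m :=
    fun a b m => ((hA a b).differentiable (by simp)).differentiableAt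
  have hE' : ∀ a (m : E), DifferentiableAt ℝ (Etil a) m :=
    fun a m => ((hEtil a).differentiable (by simp)).differentiableAt
  have hEhatFun : ∀ b, Ehat b = fun x => ∑ e, A e b x • Etil e x := fun b => funext (hEhat b)
  -- derivative of Ê_b
  have hDeriv : ∀ b (m : E) (v : E),
      fderiv ℝ (Ehat b) m v
        = ∑ e, ((fderiv ℝ (A e b) m v) • Etil e m + A e b m • fderiv ℝ (Etil e) m v) := by
    intro b m v
    rw [hEhatFun b, fderiv_fun_sum (fun e _ => (hA' e b m).fun_smul (hE' e m)),
      ContinuousLinearMap.sum_apply]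
    refine Finset.sum_congr rfl fun e _ => ?_
    rw [fderiv_fun_smul (hA' e b m) (hE' e m)]
    simp [add_comm]
  -- linearity of any derivative applied to Ê_b m
  have hlinE : ∀ (X : E → E) (m : E) (b : ι),
      fderiv ℝ X m (Ehat b m) = ∑ e, A e b m • fderiv ℝ X m (Etil e m) := by
    intro X m b
    rw [hEhat b m, map_sum]
    exact Finset.sum_congr rfl fun e _ => (fderiv ℝ X m).map_smul _ _
  have hPDE' : ∀ a b c (m : E),
      fderiv ℝ (A c b) m (Etil a m) = -∑ d, C c a d * A d b m := by
    intro a b c m; have := hPDE a b c m; linarith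
  have part1 : ∀ a b (m : E),
      fderiv ℝ (Ehat b) m (Etil a m) - fderiv ℝ (Etil a) m (Ehat b m) = 0 := by
    intro a b m
    rw [hDeriv b m (Etil a m), hlinE (Etil a) m b, ← Finset.sum_sub_distrib]
    have key : ∀ e : ι,
        (fderiv ℝ (A e b) m (Etil a m)) • Etil e m
            + A e b m • fderiv ℝ (Etil e) m (Etil a m)
            - A e b m • fderiv ℝ (Etil a) m (Etil e m)
          = (-∑ d, C e a d * A d b m) • Etil e m + A e b m • ∑ c, C c a e • Etil c m := by
      intro e
      rw [hPDE' a b e m, ← hbrac a e m, smul_sub]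
      abel
    rw [Finset.sum_congr rfl fun e _ => key e, Finset.sum_add_distrib]
    have h1 : ∑ e, (-∑ d, C e a d * A d b m) • Etil e m
        = -∑ e, ∑ d, (C e a d * A d b m) • Etil e m := by
      simp [Finset.sum_smul]
    have h2 : ∑ e, A e b m • ∑ c, C c a e • Etil c m
        = ∑ e, ∑ d, (C e a d * A d b m) • Etil e m := by
      calc ∑ e, A e b m • ∑ c, C c a e • Etil c m
          = ∑ e, ∑ c, (C c a e * A e b m) • Etil c m := by
            refine Finset.sum_congr rfl fun e _ => ?_
            rw [Finset.smul_sum]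
            refine Finset.sum_congr rfl fun c _ => ?_
            rw [smul_smul, mul_comm]
        _ = ∑ e, ∑ d, (C e a d * A d b m) • Etil e m := Finset.sum_comm
    rw [h1, h2]
    abel
  refine ⟨part1, ?_⟩
  intro a b m
  -- antisymmetry of the structure-constant sums, pointwise
  have antis : ∀ d e : ι, ∑ f, C f e d • Etil f m = -∑ f, C f d e • Etil f m := by
    intro d e
    rw [← hbrac e d m, ← hbrac d e m]; abel
  -- compute the left-hand side
  have e1 : fderiv ℝ (Ehat b) m (Ehat a m)
      = ∑ d, ∑ e, (A d a m * A e b m) • fderiv ℝ (Etil d) m (Etil e m) := by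
    rw [hlinE (Ehat b) m a]
    refine Finset.sum_congr rfl fun d _ => ?_
    rw [sub_eq_zero.mp (part1 d b m), hlinE (Etil d) m b, Finset.smul_sum]
    exact Finset.sum_congr rfl fun e _ => smul_smul _ _ _
  have e2 : fderiv ℝ (Ehat a) m (Ehat b m)
      = ∑ d, ∑ e, (A d a m * A e b m) • fderiv ℝ (Etil e) m (Etil d m) := by
    rw [hlinE (Ehat a) m b]
    have : ∑ e, A e b m • fderiv ℝ (Ehat a) m (Etil e m)
        = ∑ e, ∑ d, (A d a m * A e b m) • fderiv ℝ (Etil e) m (Etil d m) := by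
      refine Finset.sum_congr rfl fun e _ => ?_
      rw [sub_eq_zero.mp (part1 e a m), hlinE (Etil e) m a, Finset.smul_sum]
      refine Finset.sum_congr rfl fun d _ => ?_
      rw [smul_smul, mul_comm]
    rw [this, Finset.sum_comm]
  have hLHS : fderiv ℝ (Ehat b) m (Ehat a m) - fderiv ℝ (Ehat a) m (Ehat b m)
      = -∑ d, ∑ e, ∑ f, (A d a m * A e b m * C f d e) • Etil f m := by
    rw [e1, e2, ← Finset.sum_sub_distrib]
    rw [show -∑ d, ∑ e, ∑ f, (A d a m * A e b m * C f d e) • Etil f m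
        = ∑ d, -∑ e, ∑ f, (A d a m * A e b m * C f d e) • Etil f m by
      rw [← Finset.sum_neg_distrib]]
    refine Finset.sum_congr rfl fun d _ => ?_
    rw [← Finset.sum_sub_distrib, ← Finset.sum_neg_distrib]
    refine Finset.sum_congr rfl fun e _ => ?_
    rw [← smul_sub, hbrac e d m, antis d e, smul_neg, Finset.smul_sum]
    exact congrArg Neg.neg (Finset.sum_congr rfl fun f _ => smul_smul _ _ _)
  -- compute the right-hand side
  have coef : ∀ g : ι,
      (∑ c, (∑ d, ∑ e, ∑ f, A d a m * A e b m * Abar c f m * C f d e) * A g c m)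
        = ∑ d, ∑ e, A d a m * A e b m * C g d e := by
    intro g
    have step : ∀ c : ι,
        (∑ d, ∑ e, ∑ f, A d a m * A e b m * Abar c f m * C f d e) * A g c m
          = ∑ d, ∑ e, ∑ f, (A d a m * A e b m * C f d e) * (A g c m * Abar c f m) := by
      intro c
      rw [Finset.sum_mul]
      refine Finset.sum_congr rfl fun d _ => ?_
      rw [Finset.sum_mul]
      refine Finset.sum_congr rfl fun e _ => ?_
      rw [Finset.sum_mul]
      exact Finset.sum_congr rfl fun f _ => by ring
    rw [Finset.sum_congr rfl fun c _ => step c]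
    rw [Finset.sum_comm]
    refine Finset.sum_congr rfl fun d _ => ?_
    rw [Finset.sum_comm]
    refine Finset.sum_congr rfl fun e _ => ?_
    rw [Finset.sum_comm]
    calc ∑ f, ∑ c, (A d a m * A e b m * C f d e) * (A g c m * Abar c f m)
        = ∑ f, (A d a m * A e b m * C f d e) * (if g = f then 1 else 0) := by
          refine Finset.sum_congr rfl fun f _ => ?_
          rw [← Finset.mul_sum, hinv₁ m g f]
      _ = A d a m * A e b m * C g d e := by
          rw [Finset.sum_congr rfl fun f _ => (mul_ite _ _ _ _ : _ = if g = f then _ else _)]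
          simp
  have hRHS : (∑ c, (∑ d, ∑ e, ∑ f, A d a m * A e b m * Abar c f m * C f d e) • Ehat c m)
      = ∑ d, ∑ e, ∑ f, (A d a m * A e b m * C f d e) • Etil f m := by
    calc (∑ c, (∑ d, ∑ e, ∑ f, A d a m * A e b m * Abar c f m * C f d e) • Ehat c m)
        = ∑ c, ∑ g, ((∑ d, ∑ e, ∑ f, A d a m * A e b m * Abar c f m * C f d e) * A g c m)
            • Etil g m := by
          refine Finset.sum_congr rfl fun c _ => ?_
          rw [hEhat c m, Finset.smul_sum]
          exact Finset.sum_congr rfl fun g _ => smul_smul _ _ _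
      _ = ∑ g, (∑ c, (∑ d, ∑ e, ∑ f, A d a m * A e b m * Abar c f m * C f d e) * A g c m)
            • Etil g m := by
          rw [Finset.sum_comm]
          exact Finset.sum_congr rfl fun g _ => (Finset.sum_smul).symm
      _ = ∑ g, (∑ d, ∑ e, A d a m * A e b m * C g d e) • Etil g m := by
          exact Finset.sum_congr rfl fun g _ => by rw [coef g]
      _ = ∑ d, ∑ e, ∑ f, (A d a m * A e b m * C f d e) • Etil f m := by
          have expand : ∀ g : ι, (∑ d, ∑ e, A d a m * A e b m * C g d e) • Etil g m
              = ∑ d, ∑ e, (A d a m * A e b m * C g d e) • Etil g m := by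
            intro g
            rw [Finset.sum_smul]
            exact Finset.sum_congr rfl fun d _ => Finset.sum_smul
          rw [Finset.sum_congr rfl fun g _ => expand g, Finset.sum_comm]
          exact Finset.sum_congr rfl fun d _ => Finset.sum_comm
  rw [hLHS, hRHS]
end

section
/- Let ω be the (1,1) tensor field on M determined by a principal connection on π (the projection of each tangent space onto its vertical subspace along the horizontal subspace), so that ω² = ω, ω(ξ_M) = ξ_M, and L_{ξ_M}ω = 0 for all ξ ∈ 𝔤. Then its complete lift ω^C = σ∘Tω∘σ (σ the canonical involution of TTM) is a (1,1) tensor field on TM satisfying: (ω^C)² = ω^C; ω^C(X^C) = 0 and ω^C(X^V) = 0 for every vector field X on M horizontal with respect to ω; ω^C((ξ_M)^V) = (ξ_M)^V and ω^C((ξ_M)^C) = (ξ_M)^C for all ξ ∈ 𝔤; and L_{ξ_{TM}}ω^C = 0 for all ξ ∈ 𝔤. Hence ω^C defines a G-invariant connection on the fibre bundle Tπ: TM → T(M/G). -/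
section Aux
variable {E F G : Type*} [NormedAddCommGroup E] [NormedSpace ℝ E]
  [NormedAddCommGroup F] [NormedSpace ℝ F] [NormedAddCommGroup G] [NormedSpace ℝ G]

lemma clt_fderiv_apply_apply {c : E → F →L[ℝ] G} {g : E → F} {x : E}
    (hc : DifferentiableAt ℝ c x) (hg : DifferentiableAt ℝ g x) (w : E) :
    fderiv ℝ (fun m => c m (g m)) x w = fderiv ℝ c x w (g x) + c x (fderiv ℝ g x w) := by
  rw [fderiv_clm_apply hc hg]; simp [add_comm]

lemma clt_fderiv_apply_const {c : E → F →L[ℝ] G} {x : E}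
    (hc : DifferentiableAt ℝ c x) (v : F) (w : E) :
    fderiv ℝ (fun m => c m v) x w = fderiv ℝ c x w v := by
  rw [fderiv_clm_apply hc (differentiableAt_const v)]; simp

lemma clt_fderiv_comp_fst {E' : Type*} [NormedAddCommGroup E'] [NormedSpace ℝ E']
    {h : E → F} {p : E × E'} (hh : DifferentiableAt ℝ h p.1) (s : E) (t : E') :
    fderiv ℝ (fun q : E × E' => h q.1) p (s, t) = fderiv ℝ h p.1 s := by
  have heq : (fun q : E × E' => h q.1) = h ∘ Prod.fst := rfl
  rw [heq, fderiv_comp _ hh differentiableAt_fst, fderiv_fst]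
  simp

lemma clt_prod_eq (A : E →L[ℝ] F) (B : E →L[ℝ] G) :
    A.prod B = ((ContinuousLinearMap.inl ℝ F G).comp A)
      + ((ContinuousLinearMap.inr ℝ F G).comp B) := by
  ext v <;> simp

lemma clt_fderiv_mix {F : Type*} [NormedAddCommGroup F] [NormedSpace ℝ F]
    {g : E → E →L[ℝ] F} (hg : ContDiff ℝ (⊤ : ℕ∞) g) (x w s t : E) :
    fderiv ℝ (fun q : E × E => g q.1 q.2) ((x, w) : E × E) (s, t)
      = fderiv ℝ g x s w + g x t := by
  have hgd : Differentiable ℝ g := hg.differentiable (by simp)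
  have hgc : DifferentiableAt ℝ (fun q : E × E => g q.1) ((x, w) : E × E) :=
    (hgd x).comp _ differentiableAt_fst
  have h := clt_fderiv_apply_apply (c := fun q : E × E => g q.1)
    (g := Prod.snd) (x := ((x, w) : E × E)) hgc differentiableAt_snd (s, t)
  rw [clt_fderiv_comp_fst (p := ((x, w) : E × E)) (hgd x) s t] at h
  rw [fderiv_snd] at h
  simpa using h

end Aux

/- STATEMENT 10 (the Vilms connection, via the complete lift of ω). -/
noncomputable def completeLiftTensor {E : Type*} [NormedAddCommGroup E]
    [NormedSpace ℝ E] (ω : E → E →L[ℝ] E) (p : E × E) : (E × E) →L[ℝ] (E × E) :=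
  ((ω p.1).comp (ContinuousLinearMap.fst ℝ E E)).prod
    ((((fderiv ℝ ω p.1) p.2).comp (ContinuousLinearMap.fst ℝ E E))
      + ((ω p.1).comp (ContinuousLinearMap.snd ℝ E E)))

theorem complete_lift_of_principal_connection_tensor
    {E A : Type*} [NormedAddCommGroup E] [NormedSpace ℝ E]
    [NormedRing A] [NormedAlgebra ℝ A] [CompleteSpace A]
    -- the right action of G = Aˣ on M and its fundamental vector fields ξ_M
    (ψ : A → E → E)
    (hψ_one : ∀ m, ψ 1 m = m)
    (hψ_mul : ∀ (g h : Aˣ) (m : E), ψ (↑g) (ψ (↑h) m) = ψ (↑(h * g)) m)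
    (hψ_smooth : ∀ g : Aˣ, ContDiff ℝ (⊤ : ℕ∞) (ψ (↑g)))
    (fund : A → E → E) (hfundsm : ∀ ξ, ContDiff ℝ (⊤ : ℕ∞) (fund ξ))
    (hfund : ∀ (ξ : A) (m : E),
      HasDerivAt (fun t : ℝ => ψ (NormedSpace.exp (t • ξ)) m) (fund ξ m) 0)
    -- the (1,1) tensor ω of a principal connection: a projection onto the
    -- vertical subspaces, with ω(ξ_M) = ξ_M and L_{ξ_M}ω = 0
    (ω : E → E →L[ℝ] E) (hωsm : ContDiff ℝ (⊤ : ℕ∞) ω)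
    (hproj : ∀ (m : E) (v : E), ω m (ω m v) = ω m v)
    (hωfund : ∀ (ξ : A) (m : E), ω m (fund ξ m) = fund ξ m)
    (hLieω : ∀ (ξ : A) (m : E) (v : E),
      (fderiv ℝ ω m (fund ξ m)) v - fderiv ℝ (fund ξ) m (ω m v)
        + ω m (fderiv ℝ (fund ξ) m v) = 0) :
    -- (a) ω^C is a projection operator
    (∀ (p : E × E) (u : E × E),
      completeLiftTensor ω p (completeLiftTensor ω p u) = completeLiftTensor ω p u)
    -- (b) ω^C vanishes on complete and vertical lifts of horizontal vector fields
    ∧ (∀ X : E → E, ContDiff ℝ (⊤ : ℕ∞) X → (∀ m, ω m (X m) = 0) →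
      ∀ p : E × E,
        completeLiftTensor ω p ((X p.1, fderiv ℝ X p.1 p.2)) = 0
        ∧ completeLiftTensor ω p ((0, X p.1)) = 0)
    -- (c) ω^C fixes vertical and complete lifts of the fundamental fields
    ∧ (∀ (ξ : A) (p : E × E),
      completeLiftTensor ω p ((0, fund ξ p.1)) = ((0, fund ξ p.1) : E × E)
      ∧ completeLiftTensor ω p ((fund ξ p.1, fderiv ℝ (fund ξ) p.1 p.2))
          = ((fund ξ p.1, fderiv ℝ (fund ξ) p.1 p.2) : E × E))
    -- (d) L_{ξ_{TM}} ω^C = 0, where ξ_{TM} = (ξ_M)^C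
    ∧ (∀ (ξ : A) (p : E × E) (u : E × E),
      (fderiv ℝ (completeLiftTensor ω) p
          ((fund ξ p.1, fderiv ℝ (fund ξ) p.1 p.2))) u
        - fderiv ℝ (fun q : E × E =>
            ((fund ξ q.1, fderiv ℝ (fund ξ) q.1 q.2) : E × E)) p
            (completeLiftTensor ω p u)
        + completeLiftTensor ω p
            (fderiv ℝ (fun q : E × E =>
              ((fund ξ q.1, fderiv ℝ (fund ξ) q.1 q.2) : E × E)) p u)
        = 0) := by
  have hωd : Differentiable ℝ ω := hωsm.differentiable (by simp)
  have hDωc : ContDiff ℝ (⊤ : ℕ∞) (fderiv ℝ ω) := hωsm.fderiv_right (by simp)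
  have hDωd : Differentiable ℝ (fderiv ℝ ω) := hDωc.differentiable (by simp)
  -- value of the complete lift
  have hΦapp : ∀ (q v : E × E), completeLiftTensor ω q v
      = (ω q.1 v.1, fderiv ℝ ω q.1 q.2 v.1 + ω q.1 v.2) := by
    intro q v
    simp [completeLiftTensor]
  -- differentiated projection identity
  have dproj : ∀ (x w a : E),
      fderiv ℝ ω x w (ω x a) + ω x (fderiv ℝ ω x w a) = fderiv ℝ ω x w a := by
    intro x w a
    have hga : DifferentiableAt ℝ (fun m => ω m a) x :=
      (hωd x).clm_apply (differentiableAt_const a)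
    have heq : (fun m => ω m (ω m a)) = fun m => ω m a := funext fun m => hproj m a
    have h1 : fderiv ℝ (fun m => ω m (ω m a)) x w
        = fderiv ℝ ω x w (ω x a) + ω x (fderiv ℝ (fun m => ω m a) x w) :=
      clt_fderiv_apply_apply (hωd x) hga w
    rw [heq, clt_fderiv_apply_const (hωd x) a w] at h1
    exact h1.symm
  -- differentiated identity for a field g with ω (g m) = c(m) given
  have dgen : ∀ (g : E → E), Differentiable ℝ g → ∀ (x w : E),
      fderiv ℝ (fun m => ω m (g m)) x w
        = fderiv ℝ ω x w (g x) + ω x (fderiv ℝ g x w) := by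
    intro g hg x w
    exact clt_fderiv_apply_apply (hωd x) (hg x) w
  refine ⟨?_, ?_, ?_, ?_⟩
  · -- (a)
    intro p u
    simp only [hΦapp]
    refine Prod.ext ?_ ?_
    · show ω p.1 (ω p.1 u.1) = ω p.1 u.1
      exact hproj p.1 u.1
    · show fderiv ℝ ω p.1 p.2 (ω p.1 u.1)
          + ω p.1 (fderiv ℝ ω p.1 p.2 u.1 + ω p.1 u.2)
          = fderiv ℝ ω p.1 p.2 u.1 + ω p.1 u.2
      rw [map_add, hproj, ← add_assoc, dproj]
  · -- (b)
    intro X hXsm hX p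
    have hXd : Differentiable ℝ X := hXsm.differentiable (by simp)
    have hhor : ∀ x w, fderiv ℝ ω x w (X x) + ω x (fderiv ℝ X x w) = 0 := by
      intro x w
      have heq : (fun m => ω m (X m)) = fun _ => (0 : E) := funext fun m => hX m
      have h1 := dgen X hXd x w
      rw [heq] at h1
      simpa using h1.symm
    constructor
    · rw [hΦapp]
      refine Prod.ext ?_ ?_
      · exact hX p.1
      · exact hhor p.1 p.2
    · rw [hΦapp]
      refine Prod.ext ?_ ?_
      · simp
      · simpa using hX p.1
  · -- (c)
    intro ξ p
    have hfd : Differentiable ℝ (fund ξ) := (hfundsm ξ).differentiable (by simp)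
    have hfun : ∀ x w, fderiv ℝ ω x w (fund ξ x) + ω x (fderiv ℝ (fund ξ) x w)
        = fderiv ℝ (fund ξ) x w := by
      intro x w
      have heq : (fun m => ω m (fund ξ m)) = fund ξ := funext fun m => hωfund ξ m
      have h1 := dgen (fund ξ) hfd x w
      rw [heq] at h1
      exact h1.symm
    constructor
    · rw [hΦapp]
      refine Prod.ext ?_ ?_
      · simp
      · simpa using hωfund ξ p.1
    · rw [hΦapp]
      refine Prod.ext ?_ ?_
      · exact hωfund ξ p.1
      · exact hfun p.1 p.2
  · -- (d)
    intro ξ p u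
    obtain ⟨x, w⟩ := p
    obtain ⟨a, b⟩ := u
    have hfc : ContDiff ℝ (⊤ : ℕ∞) (fund ξ) := hfundsm ξ
    have hfd : Differentiable ℝ (fund ξ) := hfc.differentiable (by simp)
    have hDfc : ContDiff ℝ (⊤ : ℕ∞) (fderiv ℝ (fund ξ)) := hfc.fderiv_right (by simp)
    have hDfd : Differentiable ℝ (fderiv ℝ (fund ξ)) := hDfc.differentiable (by simp)
    -- smoothness of the complete lift
    have h1 : ContDiff ℝ (⊤ : ℕ∞) (fun q : E × E => ω q.1) := hωsm.comp contDiff_fst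
    have h2 : ContDiff ℝ (⊤ : ℕ∞) (fun q : E × E => fderiv ℝ ω q.1 q.2) :=
      (hDωc.comp contDiff_fst).clm_apply contDiff_snd
    have hΦc : ContDiff ℝ (⊤ : ℕ∞) (completeLiftTensor ω) := by
      have heq : completeLiftTensor ω = fun q : E × E =>
          ((ContinuousLinearMap.inl ℝ E E).comp
            ((ω q.1).comp (ContinuousLinearMap.fst ℝ E E)))
          + ((ContinuousLinearMap.inr ℝ E E).comp
              (((fderiv ℝ ω q.1 q.2).comp (ContinuousLinearMap.fst ℝ E E))
                + ((ω q.1).comp (ContinuousLinearMap.snd ℝ E E)))) := by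
        funext q
        rw [completeLiftTensor, clt_prod_eq]
      rw [heq]
      exact (contDiff_const.clm_comp (h1.clm_comp contDiff_const)).add
        (contDiff_const.clm_comp ((h2.clm_comp contDiff_const).add
          (h1.clm_comp contDiff_const)))
    have hΦd : DifferentiableAt ℝ (completeLiftTensor ω) (x, w) :=
      (hΦc.differentiable (by simp)) _
    -- useful differentiability facts at (x, w)
    have hc1 : DifferentiableAt ℝ (fun q : E × E => ω q.1) ((x, w) : E × E) :=
      (h1.differentiable (by simp)) _
    have hc2 : DifferentiableAt ℝ (fun q : E × E => fderiv ℝ ω q.1 q.2)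
        ((x, w) : E × E) := (h2.differentiable (by simp)) _
    -- derivative of the complete lift of the fundamental field
    have hDF : ∀ s t : E,
        fderiv ℝ (fun q : E × E =>
            ((fund ξ q.1, fderiv ℝ (fund ξ) q.1 q.2) : E × E)) ((x, w) : E × E) (s, t)
          = ((fderiv ℝ (fund ξ) x s,
              fderiv ℝ (fderiv ℝ (fund ξ)) x s w + fderiv ℝ (fund ξ) x t) : E × E) := by
      intro s t
      have hg1 : DifferentiableAt ℝ (fun q : E × E => fund ξ q.1) ((x, w) : E × E) :=
        (hfd x).comp _ differentiableAt_fst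
      have hg2 : DifferentiableAt ℝ (fun q : E × E => fderiv ℝ (fund ξ) q.1 q.2)
          ((x, w) : E × E) :=
        (((hDfd x).comp _ differentiableAt_fst)).clm_apply differentiableAt_snd
      have hsplit : fderiv ℝ (fun q : E × E =>
            ((fund ξ q.1, fderiv ℝ (fund ξ) q.1 q.2) : E × E)) ((x, w) : E × E)
          = (fderiv ℝ (fun q : E × E => fund ξ q.1) ((x, w) : E × E)).prod
            (fderiv ℝ (fun q : E × E => fderiv ℝ (fund ξ) q.1 q.2) ((x, w) : E × E)) :=
        hg1.fderiv_prodMk hg2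
      rw [hsplit, ContinuousLinearMap.prod_apply,
        clt_fderiv_comp_fst (p := ((x, w) : E × E)) (hfd x) s t,
        clt_fderiv_mix hDfc x w s t]
    -- derivative of the complete lift tensor applied to a fixed vector
    have hDΦ : ∀ s t : E,
        fderiv ℝ (completeLiftTensor ω) ((x, w) : E × E) (s, t) ((a, b) : E × E)
          = ((fderiv ℝ ω x s a,
              fderiv ℝ (fderiv ℝ ω) x s w a + fderiv ℝ ω x t a + fderiv ℝ ω x s b)
              : E × E) := by
      intro s t
      have happ : fderiv ℝ (completeLiftTensor ω) ((x, w) : E × E) (s, t) ((a, b) : E × E)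
          = fderiv ℝ (fun q : E × E => completeLiftTensor ω q ((a, b) : E × E))
              ((x, w) : E × E) (s, t) :=
        (clt_fderiv_apply_const hΦd ((a, b) : E × E) (s, t)).symm
      rw [happ]
      have heq : (fun q : E × E => completeLiftTensor ω q ((a, b) : E × E))
          = fun q : E × E =>
            ((ω q.1 a, fderiv ℝ ω q.1 q.2 a + ω q.1 b) : E × E) :=
        funext fun q => hΦapp q ((a, b) : E × E)
      rw [heq]
      have hg1 : DifferentiableAt ℝ (fun q : E × E => ω q.1 a) ((x, w) : E × E) :=
        hc1.clm_apply (differentiableAt_const a)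
      have hg2a : DifferentiableAt ℝ (fun q : E × E => fderiv ℝ ω q.1 q.2 a)
          ((x, w) : E × E) := hc2.clm_apply (differentiableAt_const a)
      have hg2b : DifferentiableAt ℝ (fun q : E × E => ω q.1 b) ((x, w) : E × E) :=
        hc1.clm_apply (differentiableAt_const b)
      have hsplit : fderiv ℝ (fun q : E × E =>
            ((ω q.1 a, fderiv ℝ ω q.1 q.2 a + ω q.1 b) : E × E)) ((x, w) : E × E)
          = (fderiv ℝ (fun q : E × E => ω q.1 a) ((x, w) : E × E)).prod
            (fderiv ℝ (fun q : E × E => fderiv ℝ ω q.1 q.2 a + ω q.1 b)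
              ((x, w) : E × E)) :=
        hg1.fderiv_prodMk (hg2a.add hg2b)
      rw [hsplit, ContinuousLinearMap.prod_apply]
      have e1 : fderiv ℝ (fun q : E × E => ω q.1 a) ((x, w) : E × E) (s, t)
          = fderiv ℝ ω x s a := by
        rw [clt_fderiv_apply_const (c := fun q : E × E => ω q.1) hc1 a (s, t),
          clt_fderiv_comp_fst (p := ((x, w) : E × E)) (hωd x) s t]
      have e2 : fderiv ℝ (fun q : E × E => fderiv ℝ ω q.1 q.2 a + ω q.1 b)
          ((x, w) : E × E) (s, t)
          = fderiv ℝ (fderiv ℝ ω) x s w a + fderiv ℝ ω x t a + fderiv ℝ ω x s b := by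
        have esum : fderiv ℝ (fun q : E × E => fderiv ℝ ω q.1 q.2 a + ω q.1 b)
            ((x, w) : E × E)
            = fderiv ℝ (fun q : E × E => fderiv ℝ ω q.1 q.2 a) ((x, w) : E × E)
              + fderiv ℝ (fun q : E × E => ω q.1 b) ((x, w) : E × E) :=
          fderiv_add hg2a hg2b
        rw [esum]
        have e2a : fderiv ℝ (fun q : E × E => fderiv ℝ ω q.1 q.2 a)
            ((x, w) : E × E) (s, t)
            = fderiv ℝ (fderiv ℝ ω) x s w a + fderiv ℝ ω x t a := by
          rw [clt_fderiv_apply_const (c := fun q : E × E => fderiv ℝ ω q.1 q.2)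
              hc2 a (s, t), clt_fderiv_mix hDωc x w s t]
          simp
        have e2b : fderiv ℝ (fun q : E × E => ω q.1 b) ((x, w) : E × E) (s, t)
            = fderiv ℝ ω x s b := by
          rw [clt_fderiv_apply_const (c := fun q : E × E => ω q.1) hc1 b (s, t),
            clt_fderiv_comp_fst (p := ((x, w) : E × E)) (hωd x) s t]
        rw [ContinuousLinearMap.add_apply, e2a, e2b]
      rw [e1, e2]
    -- the differentiated Lie-derivative identity
    have hDLie : ∀ w' : E,
        fderiv ℝ (fderiv ℝ ω) x w' (fund ξ x) a
          + fderiv ℝ ω x (fderiv ℝ (fund ξ) x w') a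
          - (fderiv ℝ (fderiv ℝ (fund ξ)) x w' (ω x a)
              + fderiv ℝ (fund ξ) x (fderiv ℝ ω x w' a))
          + (fderiv ℝ ω x w' (fderiv ℝ (fund ξ) x a)
              + ω x (fderiv ℝ (fderiv ℝ (fund ξ)) x w' a)) = 0 := by
      intro w'
      have hcA : DifferentiableAt ℝ (fun m => fderiv ℝ ω m (fund ξ m)) x :=
        (hDωd x).clm_apply (hfd x)
      have hA : DifferentiableAt ℝ (fun m => fderiv ℝ ω m (fund ξ m) a) x :=
        hcA.clm_apply (differentiableAt_const a)
      have hωa : DifferentiableAt ℝ (fun m => ω m a) x :=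
        (hωd x).clm_apply (differentiableAt_const a)
      have hB : DifferentiableAt ℝ (fun m => fderiv ℝ (fund ξ) m (ω m a)) x :=
        (hDfd x).clm_apply hωa
      have hfa : DifferentiableAt ℝ (fun m => fderiv ℝ (fund ξ) m a) x :=
        (hDfd x).clm_apply (differentiableAt_const a)
      have hC : DifferentiableAt ℝ (fun m => ω m (fderiv ℝ (fund ξ) m a)) x :=
        (hωd x).clm_apply hfa
      have hzero : fderiv ℝ (fun m => fderiv ℝ ω m (fund ξ m) a
          - fderiv ℝ (fund ξ) m (ω m a) + ω m (fderiv ℝ (fund ξ) m a)) x = 0 := by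
        have heq : (fun m => fderiv ℝ ω m (fund ξ m) a
            - fderiv ℝ (fund ξ) m (ω m a) + ω m (fderiv ℝ (fund ξ) m a))
            = fun _ => (0 : E) := funext fun m => hLieω ξ m a
        rw [heq]
        exact fderiv_const_apply 0
      have esplit : fderiv ℝ (fun m => fderiv ℝ ω m (fund ξ m) a
          - fderiv ℝ (fund ξ) m (ω m a) + ω m (fderiv ℝ (fund ξ) m a)) x
          = fderiv ℝ (fun m => fderiv ℝ ω m (fund ξ m) a
              - fderiv ℝ (fund ξ) m (ω m a)) x
            + fderiv ℝ (fun m => ω m (fderiv ℝ (fund ξ) m a)) x :=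
        fderiv_add (hA.sub hB) hC
      have esub : fderiv ℝ (fun m => fderiv ℝ ω m (fund ξ m) a
          - fderiv ℝ (fund ξ) m (ω m a)) x
          = fderiv ℝ (fun m => fderiv ℝ ω m (fund ξ m) a) x
            - fderiv ℝ (fun m => fderiv ℝ (fund ξ) m (ω m a)) x :=
        fderiv_sub hA hB
      have eA : fderiv ℝ (fun m => fderiv ℝ ω m (fund ξ m) a) x w'
          = fderiv ℝ (fderiv ℝ ω) x w' (fund ξ x) a
            + fderiv ℝ ω x (fderiv ℝ (fund ξ) x w') a := by
        have h := clt_fderiv_apply_const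
          (c := fun m => fderiv ℝ ω m (fund ξ m)) hcA a w'
        rw [clt_fderiv_apply_apply (hDωd x) (hfd x) w'] at h
        simpa using h
      have eB : fderiv ℝ (fun m => fderiv ℝ (fund ξ) m (ω m a)) x w'
          = fderiv ℝ (fderiv ℝ (fund ξ)) x w' (ω x a)
            + fderiv ℝ (fund ξ) x (fderiv ℝ ω x w' a) := by
        have h := clt_fderiv_apply_apply (c := fderiv ℝ (fund ξ))
          (g := fun m => ω m a) (hDfd x) hωa w'
        rw [clt_fderiv_apply_const (hωd x) a w'] at h
        exact h
      have eC : fderiv ℝ (fun m => ω m (fderiv ℝ (fund ξ) m a)) x w'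
          = fderiv ℝ ω x w' (fderiv ℝ (fund ξ) x a)
            + ω x (fderiv ℝ (fderiv ℝ (fund ξ)) x w' a) := by
        have h := clt_fderiv_apply_apply (c := ω)
          (g := fun m => fderiv ℝ (fund ξ) m a) (hωd x) hfa w'
        rw [clt_fderiv_apply_const (hDfd x) a w'] at h
        exact h
      have := congrFun (congrArg (fun L => (L : (E →L[ℝ] E)) ∘ id) hzero) w'
      have hz : fderiv ℝ (fun m => fderiv ℝ ω m (fund ξ m) a
          - fderiv ℝ (fund ξ) m (ω m a) + ω m (fderiv ℝ (fund ξ) m a)) x w' = 0 := by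
        rw [hzero]; rfl
      rw [esplit, esub] at hz
      rw [ContinuousLinearMap.add_apply, ContinuousLinearMap.sub_apply,
        eA, eB, eC] at hz
      exact hz
    -- symmetry of the second derivatives
    have hsymω : ∀ v' w' : E, fderiv ℝ (fderiv ℝ ω) x v' w'
        = fderiv ℝ (fderiv ℝ ω) x w' v' :=
      hωsm.contDiffAt.isSymmSndFDerivAt (by rw [minSmoothness_of_isRCLikeNormedField]; exact WithTop.coe_le_coe.mpr le_top)
    have hsymf : ∀ v' w' : E, fderiv ℝ (fderiv ℝ (fund ξ)) x v' w'
        = fderiv ℝ (fderiv ℝ (fund ξ)) x w' v' :=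
      hfc.contDiffAt.isSymmSndFDerivAt (by rw [minSmoothness_of_isRCLikeNormedField]; exact WithTop.coe_le_coe.mpr le_top)
    -- assemble
    rw [hDΦ (fund ξ x) (fderiv ℝ (fund ξ) x w)]
    rw [hΦapp ((x, w) : E × E) ((a, b) : E × E)]
    rw [hDF (ω x a) (fderiv ℝ ω x w a + ω x b)]
    rw [hDF a b]
    rw [hΦapp ((x, w) : E × E)]
    refine Prod.ext ?_ ?_
    · show fderiv ℝ ω x (fund ξ x) a - fderiv ℝ (fund ξ) x (ω x a)
        + ω x (fderiv ℝ (fund ξ) x a) = 0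
      exact hLieω ξ x a
    · show fderiv ℝ (fderiv ℝ ω) x (fund ξ x) w a
          + fderiv ℝ ω x (fderiv ℝ (fund ξ) x w) a + fderiv ℝ ω x (fund ξ x) b
        - (fderiv ℝ (fderiv ℝ (fund ξ)) x (ω x a) w
            + fderiv ℝ (fund ξ) x (fderiv ℝ ω x w a + ω x b))
        + (fderiv ℝ ω x w (fderiv ℝ (fund ξ) x a)
            + ω x (fderiv ℝ (fderiv ℝ (fund ξ)) x a w + fderiv ℝ (fund ξ) x b)) = 0
      have hb := hLieω ξ x b
      have ha := hDLie w
      rw [hsymω w (fund ξ x)] at ha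
      rw [hsymf w (ω x a), hsymf w a] at ha
      rw [map_add, map_add]
      have key : fderiv ℝ (fderiv ℝ ω) x (fund ξ x) w a
            + fderiv ℝ ω x (fderiv ℝ (fund ξ) x w) a
            - (fderiv ℝ (fderiv ℝ (fund ξ)) x (ω x a) w
                + fderiv ℝ (fund ξ) x (fderiv ℝ ω x w a))
            + (fderiv ℝ ω x w (fderiv ℝ (fund ξ) x a)
                + ω x (fderiv ℝ (fderiv ℝ (fund ξ)) x a w))
            + (fderiv ℝ ω x (fund ξ x) b - fderiv ℝ (fund ξ) x (ω x b)
                + ω x (fderiv ℝ (fund ξ) x b)) = 0 := by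
        rw [ha, hb, add_zero]
      rw [← key]
      abel
end

section
/- Let γ be the horizontal lift of a principal connection on π: M → M/G and ω the corresponding (1,1) tensor field (so γ∘Tπ = id − ω as maps on TM). Define γ^C: (Tπ)*TT(M/G) → TTM by γ^C(v, Y) := σ(Tγ(v, σ̄(Y))) for v ∈ TM and Y ∈ T_{Tπ(v)}T(M/G), where σ and σ̄ are the canonical involutions of TTM and TT(M/G). Then TTπ∘γ^C = id, so γ^C is a right splitting of TTπ: TTM → (Tπ)*TT(M/G); moreover the corresponding left splitting id − γ^C∘TTπ equals σ∘Tω∘σ = ω^C. (The proof uses the property TTπ∘σ = σ̄∘TTπ.) -/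
/- STATEMENT 11 (the right splitting γ^C of the Vilms connection).
M is modelled on `E`, M/G on `F`; TM = E × E, T(M/G) = F × F, TTM = (E×E) × (E×E).
A principal connection on π : M → M/G is given by its horizontal lift
γ : π*T(M/G) → TM (a map E → F →L[ℝ] E) and vertical projector ω, related by
γ ∘ Tπ = id − ω.  The map γ^C(v, Y) := σ(Tγ(v, σ̄(Y))) computed in this model is
  γ^C(m,w)(Y₁,Y₂) = (γ_m Y₁, (Dγ(m)w) Y₁ + γ_m Y₂),
and the second tangent map of π is
  TTπ(m,w)(a,b) = (Dπ(m) a, (D²π(m) a) w + Dπ(m) b).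
Claims: TTπ ∘ γ^C = id (so γ^C is a right splitting of TTπ), and the corresponding
left splitting id − γ^C ∘ TTπ equals ω^C = σ ∘ Tω ∘ σ, i.e.
  ω^C(m,w)(a,b) = (ω_m a, (Dω(m)w) a + ω_m b). -/
theorem vilms_splitting
    {E F : Type*} [NormedAddCommGroup E] [NormedSpace ℝ E]
    [NormedAddCommGroup F] [NormedSpace ℝ F]
    -- the bundle projection π, a surjective submersion
    (π : E → F) (hπ : ContDiff ℝ (⊤ : ℕ∞) π)
    (hsub : ∀ m : E, Function.Surjective (fderiv ℝ π m))
    -- the horizontal lift γ and vertical projector ω of a principal connection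
    (γ : E → F →L[ℝ] E) (hγ : ContDiff ℝ (⊤ : ℕ∞) γ)
    (ω : E → E →L[ℝ] E) (hω : ContDiff ℝ (⊤ : ℕ∞) ω)
    (hωvert : ∀ (m : E) (v : E), fderiv ℝ π m (ω m v) = 0)
    -- γ ∘ Tπ = id − ω
    (hγTπ : ∀ (m : E) (v : E), γ m (fderiv ℝ π m v) = v - ω m v) :
    -- (a) TTπ ∘ γ^C = id
    (∀ (p : E × E) (Y : F × F),
      ((fderiv ℝ π p.1 (γ p.1 Y.1),
        ((fderiv ℝ (fderiv ℝ π) p.1) (γ p.1 Y.1)) p.2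
          + fderiv ℝ π p.1 ((fderiv ℝ γ p.1 p.2) Y.1 + γ p.1 Y.2)) : F × F) = Y)
    -- (b) id − γ^C ∘ TTπ = ω^C
    ∧ (∀ (p : E × E) (u : E × E),
      u - ((γ p.1 (fderiv ℝ π p.1 u.1),
            (fderiv ℝ γ p.1 p.2) (fderiv ℝ π p.1 u.1)
              + γ p.1 (((fderiv ℝ (fderiv ℝ π) p.1) u.1) p.2
                  + fderiv ℝ π p.1 u.2)) : E × E)
        = ((ω p.1 u.1, ((fderiv ℝ ω p.1) p.2) u.1 + ω p.1 u.2) : E × E)) := by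
  have hπd : Differentiable ℝ π := hπ.differentiable (by simp)
  have hπ' : ContDiff ℝ (⊤ : ℕ∞) (fderiv ℝ π) := hπ.fderiv_right (by simp)
  have hπ'd : Differentiable ℝ (fderiv ℝ π) := hπ'.differentiable (by simp)
  have hγd : Differentiable ℝ γ := hγ.differentiable (by simp)
  have hωd : Differentiable ℝ ω := hω.differentiable (by simp)
  have hsymm : ∀ (m a b : E),
      fderiv ℝ (fderiv ℝ π) m a b = fderiv ℝ (fderiv ℝ π) m b a := fun m a b =>
    second_derivative_symmetric (fun y => (hπd y).hasFDerivAt) (hπ'd m).hasFDerivAt a b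
  have hDπγ : ∀ (m : E) (Y : F), fderiv ℝ π m (γ m Y) = Y := by
    intro m Y
    obtain ⟨v, hv⟩ := hsub m Y
    rw [← hv, hγTπ, map_sub, hωvert, sub_zero]
  -- derivative of the constant map m ↦ Dπ m (γ m Y) = Y
  have key1 : ∀ (m w : E) (Y : F),
      fderiv ℝ (fderiv ℝ π) m w (γ m Y) + fderiv ℝ π m ((fderiv ℝ γ m w) Y) = 0 := by
    intro m w Y
    have hu : DifferentiableAt ℝ (fun y => γ y Y) m :=
      (hγd m).clm_apply (differentiableAt_const Y)
    have h1 : fderiv ℝ (fun y => fderiv ℝ π y (γ y Y)) m =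
        (fderiv ℝ π m).comp (fderiv ℝ (fun y => γ y Y) m)
          + (fderiv ℝ (fderiv ℝ π) m).flip (γ m Y) :=
      fderiv_clm_apply (hπ'd m) hu
    have h2 : fderiv ℝ (fun y => γ y Y) m =
        (γ m).comp (fderiv ℝ (fun _ : E => Y) m) + (fderiv ℝ γ m).flip Y :=
      fderiv_clm_apply (hγd m) (differentiableAt_const Y)
    have h0 : fderiv ℝ (fun y => fderiv ℝ π y (γ y Y)) m = 0 := by
      have : (fun y => fderiv ℝ π y (γ y Y)) = fun _ => Y := funext fun y => hDπγ y Y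
      rw [this, fderiv_fun_const]; rfl
    have h3 := congrFun (congrArg (fun L : E →L[ℝ] F => (L : E → F)) (h0 ▸ h1.symm)) w
    simp only [ContinuousLinearMap.add_apply, ContinuousLinearMap.coe_comp',
      Function.comp_apply, ContinuousLinearMap.flip_apply, h2, fderiv_fun_const,
      Pi.zero_apply, ContinuousLinearMap.zero_apply, map_zero, zero_add] at h3
    rw [add_comm]; exact h3
  -- derivative of m ↦ γ m (Dπ m v) = v - ω m v
  have key2 : ∀ (m w v : E),
      (fderiv ℝ γ m w) (fderiv ℝ π m v) + γ m (fderiv ℝ (fderiv ℝ π) m w v)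
        = -((fderiv ℝ ω m w) v) := by
    intro m w v
    have hu : DifferentiableAt ℝ (fun y => fderiv ℝ π y v) m :=
      (hπ'd m).clm_apply (differentiableAt_const v)
    have h1 : fderiv ℝ (fun y => γ y (fderiv ℝ π y v)) m =
        (γ m).comp (fderiv ℝ (fun y => fderiv ℝ π y v) m)
          + (fderiv ℝ γ m).flip (fderiv ℝ π m v) :=
      fderiv_clm_apply (hγd m) hu
    have h2 : fderiv ℝ (fun y => fderiv ℝ π y v) m =
        ((fderiv ℝ π m).comp (fderiv ℝ (fun _ : E => v) m)
          + (fderiv ℝ (fderiv ℝ π) m).flip v) :=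
      fderiv_clm_apply (hπ'd m) (differentiableAt_const v)
    have h0 : fderiv ℝ (fun y => γ y (fderiv ℝ π y v)) m
        = fderiv ℝ (fun y => v - ω y v) m := by
      congr 1; exact funext fun y => hγTπ y v
    have h4 : fderiv ℝ (fun y => v - ω y v) m = -(fderiv ℝ ω m).flip v := by
      have : fderiv ℝ (fun y : E => ω y v) m =
          (ω m).comp (fderiv ℝ (fun _ : E => v) m) + (fderiv ℝ ω m).flip v :=
        fderiv_clm_apply (hωd m) (differentiableAt_const v)
      rw [fderiv_fun_sub (differentiableAt_const v) ((hωd m).clm_apply (differentiableAt_const v)),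
        fderiv_fun_const, this]
      ext z
      simp
    have h3 := congrFun (congrArg (fun L : E →L[ℝ] E => (L : E → E)) (h1.symm.trans (h0.trans h4))) w
    simp only [ContinuousLinearMap.add_apply, ContinuousLinearMap.coe_comp',
      Function.comp_apply, ContinuousLinearMap.flip_apply, h2, fderiv_fun_const,
      Pi.zero_apply, ContinuousLinearMap.zero_apply, map_zero, zero_add,
      ContinuousLinearMap.neg_apply] at h3
    rw [add_comm]; exact h3
  constructor
  · rintro ⟨m, w⟩ ⟨Y₁, Y₂⟩
    simp only [Prod.mk.injEq]
    refine ⟨hDπγ m Y₁, ?_⟩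
    rw [map_add, hDπγ m Y₂, hsymm m (γ m Y₁) w, ← add_assoc, key1 m w Y₁, zero_add]
  · rintro ⟨m, w⟩ ⟨u₁, u₂⟩
    simp only [Prod.mk_sub_mk, Prod.mk.injEq]
    constructor
    · rw [hγTπ m u₁]; abel
    · rw [map_add, hγTπ m u₂, hsymm m u₁ w]
      have := key2 m w u₁
      have h5 : γ m (fderiv ℝ (fderiv ℝ π) m w u₁)
          = -((fderiv ℝ ω m w) u₁) - (fderiv ℝ γ m w) (fderiv ℝ π m u₁) := by
        rw [← this]; abel
      rw [h5]; abel
end
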